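/- arXiv:1203.3667 — 5 statements merged into one kernel-verified Lean document; each statement's English description precedes it below -/
import Mathlib

section
/- Let (G_i)_{i ∈ I} be a family of groups and D_i ⊆ G_i a quasi difference set with 1_i ∈ D_i for each i. Then the set ⋃_{i∈I} ε_i(D_i) ⊆ ⨁_{i∈I} G_i (where ε_i is the canonical inclusion of G_i into the direct sum) is a quasi difference set in the direct sum ⨁_{i∈I} G_i. -/
/-- Each coordinate of a `mulSingle` of an element of `D i` lies in `D k`,
since `1 ∈ D k`. -/
lemma stmt7_mem_aux {I : Type*} [DecidableEq I] {G : I → Type*} [∀ i, Group (G i)]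
    (D : ∀ i, Set (G i)) (h1 : ∀ i, (1 : G i) ∈ D i) {i : I} {x : G i}
    (hx : x ∈ D i) (k : I) : Pi.mulSingle i x k ∈ D k := by
  rcases eq_or_ne k i with rfl | h
  · simpa using hx
  · simpa [Pi.mulSingle_eq_of_ne h] using h1 k

/-- Two `mulSingle`s agreeing at a coordinate where they are nontrivial are equal. -/
lemma stmt7_single_aux {I : Type*} [DecidableEq I] {G : I → Type*} [∀ i, Group (G i)]
    {i i' k : I} {x : G i} {x' : G i'}
    (h : Pi.mulSingle i x k = Pi.mulSingle i' x' k)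
    (hne : Pi.mulSingle i x k ≠ 1) :
    Pi.mulSingle i x = Pi.mulSingle i' x' := by
  have hk : k = i := by
    by_contra hki
    exact hne (Pi.mulSingle_eq_of_ne hki x)
  have hk' : k = i' := by
    by_contra hki
    rw [h] at hne
    exact hne (Pi.mulSingle_eq_of_ne hki x')
  subst hk
  subst hk'
  simpa using h

/-- a direct sum of quasi difference sets is a quasi difference set. -/
theorem stmt7 {I : Type*} [DecidableEq I] {G : I → Type*} [∀ i, Group (G i)]
    (D : ∀ i, Set (G i)) (h1 : ∀ i, (1 : G i) ∈ D i)
    (hQDS : ∀ i, ∀ c : G i, c ≠ 1 → ∀ a b a' b' : G i,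
      a ∈ D i → b ∈ D i → a' ∈ D i → b' ∈ D i →
      a * b⁻¹ = c → a' * b'⁻¹ = c → a = a' ∧ b = b') :
    ∀ c : (∀ i, G i), c ≠ 1 → ∀ a b a' b' : (∀ i, G i),
      a ∈ ⋃ i, Pi.mulSingle i '' D i → b ∈ ⋃ i, Pi.mulSingle i '' D i →
      a' ∈ ⋃ i, Pi.mulSingle i '' D i → b' ∈ ⋃ i, Pi.mulSingle i '' D i →
      a * b⁻¹ = c → a' * b'⁻¹ = c → a = a' ∧ b = b' := by
  intro c hc a b a' b' ha hb ha' hb' hab hab'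
  rw [Set.mem_iUnion] at ha hb ha' hb'
  obtain ⟨i, x, hx, rfl⟩ := ha
  obtain ⟨j, y, hy, rfl⟩ := hb
  obtain ⟨i', x', hx', rfl⟩ := ha'
  obtain ⟨j', y', hy', rfl⟩ := hb'
  obtain ⟨k, hk⟩ := Function.ne_iff.mp hc
  have e1 : Pi.mulSingle i x k * (Pi.mulSingle j y k)⁻¹ = c k := congrFun hab k
  have e2 : Pi.mulSingle i' x' k * (Pi.mulSingle j' y' k)⁻¹ = c k := congrFun hab' k
  obtain ⟨hA, hB⟩ := hQDS k (c k) hk _ _ _ _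
    (stmt7_mem_aux D h1 hx k) (stmt7_mem_aux D h1 hy k)
    (stmt7_mem_aux D h1 hx' k) (stmt7_mem_aux D h1 hy' k) e1 e2
  rcases eq_or_ne (Pi.mulSingle i x k) 1 with hak | hak
  · -- then b k ≠ 1
    have hbk : Pi.mulSingle j y k ≠ 1 := by
      intro hbk
      rw [hak, hbk] at e1
      simp at e1
      exact hk e1.symm
    have hbb : Pi.mulSingle j y = Pi.mulSingle j' y' := stmt7_single_aux hB hbk
    refine ⟨?_, hbb⟩
    have := hab.trans hab'.symm
    rw [hbb] at this
    exact mul_right_cancel this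
  · have haa : Pi.mulSingle i x = Pi.mulSingle i' x' := stmt7_single_aux hA hak
    refine ⟨haa, ?_⟩
    have := hab.trans hab'.symm
    rw [haa] at this
    exact inv_injective (mul_left_cancel this)
end

section
/- Let G be an abelian group and D ⊆ G a quasi difference set satisfying (★): for all d₁,d₂,d₃,d₄ ∈ D, if d₁ − d₂ + d₃ − d₄ ∈ D − D then d₁ = d₂ or d₃ = d₄ or d₁ = d₄ or d₃ = d₂. Let a ∈ G, d₁, d₂ ∈ D with d₁ ≠ d₂, and let p₁ = a − d₁ + d₁' and p₂ = a − d₂ + d₂' with d₁', d₂' ∈ D, p₁ ≠ a ≠ p₂. Then p₁ and p₂ are collinear in D(G,D) if and only if d₁' = d₂'. -/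
/-- under condition (★), two points p₁ = a - d₁ + d₁' and
p₂ = a - d₂ + d₂' (on the distinct lines [a-d₁], [a-d₂] through a, distinct
from a) are collinear iff d₁' = d₂'. -/
theorem stmt8 {G : Type*} [AddCommGroup G] (D : Set G)
    (hQDS : ∀ c : G, c ≠ 0 → ∀ a b a' b' : G, a ∈ D → b ∈ D → a' ∈ D → b' ∈ D →
      a - b = c → a' - b' = c → a = a' ∧ b = b')
    (hstar : ∀ d₁ d₂ d₃ d₄ : G, d₁ ∈ D → d₂ ∈ D → d₃ ∈ D → d₄ ∈ D →
      (∃ u ∈ D, ∃ v ∈ D, d₁ - d₂ + d₃ - d₄ = u - v) →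
      d₁ = d₂ ∨ d₃ = d₄ ∨ d₁ = d₄ ∨ d₃ = d₂)
    (a d₁ d₂ d₁' d₂' : G)
    (hd₁ : d₁ ∈ D) (hd₂ : d₂ ∈ D) (hd₁' : d₁' ∈ D) (hd₂' : d₂' ∈ D)
    (hne : d₁ ≠ d₂)
    (hp₁ : a - d₁ + d₁' ≠ a) (hp₂ : a - d₂ + d₂' ≠ a) :
    (∃ u ∈ D, ∃ v ∈ D, (a - d₂ + d₂') - (a - d₁ + d₁') = u - v) ↔ d₁' = d₂' := by
  have h1 : d₁' ≠ d₁ := fun h => hp₁ (by rw [h]; abel)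
  have h2 : d₂' ≠ d₂ := fun h => hp₂ (by rw [h]; abel)
  constructor
  · rintro ⟨u, hu, v, hv, huv⟩
    have := hstar d₁ d₂ d₂' d₁' hd₁ hd₂ hd₂' hd₁'
      ⟨u, hu, v, hv, by rw [← huv]; abel⟩
    rcases this with h | h | h | h
    · exact absurd h hne
    · exact h.symm
    · exact absurd h.symm h1
    · exact absurd h h2
  · rintro rfl
    exact ⟨d₁, hd₁, d₂, hd₂, by abel⟩
end

section
/- Let G be an abelian group and D ⊆ G a quasi difference set satisfying (★): for all d₁,d₂,d₃,d₄ ∈ D, if d₁ − d₂ + d₃ − d₄ ∈ D − D then d₁ = d₂ or d₃ = d₄ or d₁ = d₄ or d₃ = d₂. Then the structure D(G,D) is Veblenian: for any point a and two distinct lines L₁, L₂ through a, any two lines G₁, G₂ that each cross both L₁ and L₂ and do not pass through a must intersect each other. -/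
private lemma stmt9_key {G : Type*} [AddCommGroup G] (D : Set G)
    (hQDS : ∀ c : G, c ≠ 0 → ∀ a b a' b' : G, a ∈ D → b ∈ D → a' ∈ D → b' ∈ D →
      a - b = c → a' - b' = c → a = a' ∧ b = b')
    (hstar : ∀ d₁ d₂ d₃ d₄ : G, d₁ ∈ D → d₂ ∈ D → d₃ ∈ D → d₄ ∈ D →
      (∃ u ∈ D, ∃ v ∈ D, d₁ - d₂ + d₃ - d₄ = u - v) →
      d₁ = d₂ ∨ d₃ = d₄ ∨ d₁ = d₄ ∨ d₃ = d₂)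
    (a b₁ b₂ g x y : G) (hb : b₁ ≠ b₂)
    (h1 : a - b₁ ∈ D) (h2 : a - b₂ ∈ D)
    (hx1 : x - g ∈ D) (hx2 : x - b₁ ∈ D)
    (hy1 : y - g ∈ D) (hy2 : y - b₂ ∈ D)
    (hag : a - g ∉ D) : x - g = a - b₂ := by
  have hc : (a - b₁) - (a - b₂) ≠ 0 := by
    intro h
    have : b₂ - b₁ = 0 := by rw [← h]; abel
    exact hb (sub_eq_zero.mp this).symm
  have e1 : (y - g) - (y - b₂) + (x - b₁) - (x - g) = (a - b₁) - (a - b₂) := by abel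
  rcases hstar _ _ _ _ hy1 hy2 hx2 hx1 ⟨_, h1, _, h2, e1⟩ with h | h | h | h
  · -- y - g = y - b₂ ⇒ g = b₂
    rw [sub_right_inj] at h
    subst h
    exact absurd h2 hag
  · -- x - b₁ = x - g ⇒ b₁ = g
    rw [sub_right_inj] at h
    subst h
    exact absurd h1 hag
  · -- y - g = x - g ⇒ y = x, common point of L₁, L₂ must be a
    rw [sub_left_inj] at h
    subst h
    obtain ⟨hA, _⟩ := hQDS _ hc _ _ _ _ hx2 hy2 h1 h2 (by abel) rfl
    rw [sub_left_inj] at hA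
    subst hA
    exact absurd hx1 hag
  · -- x - b₁ = y - b₂
    rw [← h] at e1
    have e2 : (y - g) - (x - g) = (a - b₁) - (a - b₂) := by rw [← e1]; abel
    obtain ⟨_, hB⟩ := hQDS _ hc _ _ _ _ hy1 hx1 h1 h2 e2 rfl
    exact hB

/-- under condition (★) the structure D(G,D) is Veblenian. -/
theorem stmt9 {G : Type*} [AddCommGroup G] (D : Set G)
    (hQDS : ∀ c : G, c ≠ 0 → ∀ a b a' b' : G, a ∈ D → b ∈ D → a' ∈ D → b' ∈ D →
      a - b = c → a' - b' = c → a = a' ∧ b = b')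
    (hstar : ∀ d₁ d₂ d₃ d₄ : G, d₁ ∈ D → d₂ ∈ D → d₃ ∈ D → d₄ ∈ D →
      (∃ u ∈ D, ∃ v ∈ D, d₁ - d₂ + d₃ - d₄ = u - v) →
      d₁ = d₂ ∨ d₃ = d₄ ∨ d₁ = d₄ ∨ d₃ = d₂) :
    ∀ a b₁ b₂ g₁ g₂ : G,
      {x : G | x - b₁ ∈ D} ≠ {x : G | x - b₂ ∈ D} →
      a - b₁ ∈ D → a - b₂ ∈ D →
      (∃ x : G, x - g₁ ∈ D ∧ x - b₁ ∈ D) → (∃ x : G, x - g₁ ∈ D ∧ x - b₂ ∈ D) →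
      (∃ x : G, x - g₂ ∈ D ∧ x - b₁ ∈ D) → (∃ x : G, x - g₂ ∈ D ∧ x - b₂ ∈ D) →
      a - g₁ ∉ D → a - g₂ ∉ D →
      ∃ x : G, x - g₁ ∈ D ∧ x - g₂ ∈ D := by
  intro a b₁ b₂ g₁ g₂ hL h1 h2 hX1 hY1 hX2 hY2 hag₁ hag₂
  have hb : b₁ ≠ b₂ := fun h => hL (by rw [h])
  obtain ⟨x₁, hx₁g, hx₁b⟩ := hX1
  obtain ⟨y₁, hy₁g, hy₁b⟩ := hY1
  obtain ⟨x₂, hx₂g, hx₂b⟩ := hX2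
  obtain ⟨y₂, hy₂g, hy₂b⟩ := hY2
  have k₁ := stmt9_key D hQDS hstar a b₁ b₂ g₁ x₁ y₁ hb h1 h2 hx₁g hx₁b hy₁g hy₁b hag₁
  have k₂ := stmt9_key D hQDS hstar a b₁ b₂ g₂ x₂ y₂ hb h1 h2 hx₂g hx₂b hy₂g hy₂b hag₂
  refine ⟨g₁ + (x₂ - b₁), by simpa using hx₂b, ?_⟩
  have e : g₁ + (x₂ - b₁) - g₂ = (x₁ - b₁) + ((x₂ - g₂) - (x₁ - g₁)) := by abel
  rw [k₁, k₂, sub_self, add_zero] at e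
  rw [e]
  exact hx₁b
end

section
/- Let G = (C_k)^n with k > 3, and let D_n = {e₀, e₁, …, e_n} be the canonical quasi difference set (e₀ = 0, e_i the i-th standard basis vector). Then D_n satisfies condition (★): for all d₁,d₂,d₃,d₄ ∈ D_n, if d₁ − d₂ + d₃ − d₄ ∈ D_n − D_n, then d₁ = d₂ or d₃ = d₄ or d₁ = d₄ or d₃ = d₂. -/
private def cnt {n : ℕ} (o : Option (Fin n)) (j : Fin n) : ℤ :=
  if o = some j then 1 else 0

private lemma cnt_cases {n : ℕ} (o : Option (Fin n)) (j : Fin n) :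
    cnt o j = 0 ∨ cnt o j = 1 := by
  unfold cnt; split_ifs <;> simp

private lemma cnt_ne {n : ℕ} {o : Option (Fin n)} {a : Fin n} (h : o ≠ some a) :
    cnt o a = 0 := if_neg h

private lemma cnt_self {n : ℕ} (a : Fin n) : cnt (some a) a = 1 := if_pos rfl

private lemma cnt_eq_one {n : ℕ} {o : Option (Fin n)} {a : Fin n} (h : cnt o a = 1) :
    o = some a := by
  by_contra hc; rw [cnt_ne hc] at h; omega

private lemma main1 {n : ℕ} (o1 o2 o3 o4 o5 o6 : Option (Fin n)) (a : Fin n)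
    (H : ∀ j, cnt o1 j + cnt o3 j + cnt o6 j = cnt o2 j + cnt o4 j + cnt o5 j)
    (h12 : o1 ≠ o2) (h34 : o3 ≠ o4) (h14 : o1 ≠ o4) (h32 : o3 ≠ o2)
    (h1 : o1 = some a) : False := by
  subst h1
  have ha2 : cnt o2 a = 0 := cnt_ne (fun h => h12 h.symm)
  have ha4 : cnt o4 a = 0 := cnt_ne (fun h => h14 h.symm)
  have Ha := H a
  rw [cnt_self, ha2, ha4] at Ha
  have b3 := cnt_cases o3 a
  have b6 := cnt_cases o6 a
  have b5 := cnt_cases o5 a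
  have h3a : cnt o3 a = 0 := by omega
  have h6a : cnt o6 a = 0 := by omega
  have h5a : o5 = some a := cnt_eq_one (by omega)
  match o3, h34, h32 with
  | some c, h34, h32 =>
    have hca : c ≠ a := fun h => by rw [h, cnt_self] at h3a; omega
    have Hc := H c
    rw [cnt_self, cnt_ne (fun h : (some a : Option (Fin n)) = some c => hca (Option.some.inj h).symm),
        cnt_ne (fun h => h34 h.symm), cnt_ne (fun h => h32 h.symm), h5a,
        cnt_ne (fun h : (some a : Option (Fin n)) = some c => hca (Option.some.inj h).symm)] at Hc
    have := cnt_cases o6 c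
    omega
  | none, h34, h32 =>
    match o2, h32, h12 with
    | none, h32, _ => exact h32 rfl
    | some b, h32, h12 =>
      have hba : b ≠ a := fun h => h12 (by rw [h])
      match o4, h34, h14 with
      | none, h34, _ => exact h34 rfl
      | some d, h34, h14 =>
        have hda : d ≠ a := fun h => h14 (by rw [h])
        have Hb := H b
        rw [cnt_ne (fun h : (some a : Option (Fin n)) = some b => hba (Option.some.inj h).symm),
            cnt_ne (show (none : Option (Fin n)) ≠ some b by simp), cnt_self, h5a,
            cnt_ne (fun h : (some a : Option (Fin n)) = some b => hba (Option.some.inj h).symm)] at Hb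
        have b4b := cnt_cases (some d : Option (Fin n)) b
        have b6b := cnt_cases o6 b
        have h6b : o6 = some b := cnt_eq_one (by omega)
        have h4b : cnt (some d : Option (Fin n)) b = 0 := by omega
        have hdb : d ≠ b := fun h => by rw [h, cnt_self] at h4b; omega
        have Hd := H d
        rw [cnt_ne (fun h : (some a : Option (Fin n)) = some d => hda (Option.some.inj h).symm),
            cnt_ne (show (none : Option (Fin n)) ≠ some d by simp), h6b,
            cnt_ne (fun h : (some b : Option (Fin n)) = some d => hdb (Option.some.inj h).symm),
            cnt_self, h5a,
            cnt_ne (fun h : (some a : Option (Fin n)) = some d => hda (Option.some.inj h).symm)] at Hd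
        have := cnt_cases (some b : Option (Fin n)) d
        omega

private lemma key {n : ℕ} (o1 o2 o3 o4 o5 o6 : Option (Fin n))
    (H : ∀ j, cnt o1 j + cnt o3 j + cnt o6 j = cnt o2 j + cnt o4 j + cnt o5 j) :
    o1 = o2 ∨ o3 = o4 ∨ o1 = o4 ∨ o3 = o2 := by
  by_contra hc
  push_neg at hc
  obtain ⟨h12, h34, h14, h32⟩ := hc
  match o1, o3, h12, h34, h14, h32 with
  | some a, o3, h12, h34, h14, h32 =>
    exact main1 (some a) o2 o3 o4 o5 o6 a H h12 h34 h14 h32 rfl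
  | none, some c, h12, h34, h14, h32 =>
    exact main1 (some c) o4 none o2 o5 o6 c
      (fun j => by have := H j; omega) h34 h12 h32 h14 rfl
  | none, none, h12, h34, h14, h32 =>
    match o2, h12, h32 with
    | none, h12, _ => exact h12 rfl
    | some b, h12, h32 =>
      exact main1 (some b) none o4 none o6 o5 b
        (fun j => by have := H j; omega)
        (fun h => h12 h.symm) (fun h => h34 h.symm)
        (fun h => h32 h.symm) (fun h => h14 h.symm) rfl

private def ind (k : ℕ) {n : ℕ} (o : Option (Fin n)) : Fin n → ZMod k :=
  fun j => ((cnt o j : ℤ) : ZMod k)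

private lemma mem_ind {k n : ℕ} {d : Fin n → ZMod k}
    (h : d ∈ insert (0 : Fin n → ZMod k) {x | ∃ i, x = Pi.single i 1}) :
    ∃ o : Option (Fin n), d = ind k o := by
  rcases h with h | ⟨i, hi⟩
  · exact ⟨none, by funext j; simp [h, ind, cnt]⟩
  · refine ⟨some i, ?_⟩
    funext j
    rw [hi, Pi.single_apply]
    show _ = ((cnt (some i) j : ℤ) : ZMod k)
    unfold cnt
    simp only [Option.some.injEq]
    by_cases hij : j = i
    · subst hij; simp
    · rw [if_neg hij, if_neg (fun h => hij h.symm)]; simp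

/-- for k > 3 the canonical quasi difference set
Dₙ = {0, e₁, …, eₙ} in (C_k)ⁿ satisfies condition (★). -/
theorem stmt11 (k n : ℕ) (hk : 3 < k) :
    ∀ d₁ d₂ d₃ d₄ : Fin n → ZMod k,
      d₁ ∈ insert (0 : Fin n → ZMod k) {x | ∃ i, x = Pi.single i 1} →
      d₂ ∈ insert (0 : Fin n → ZMod k) {x | ∃ i, x = Pi.single i 1} →
      d₃ ∈ insert (0 : Fin n → ZMod k) {x | ∃ i, x = Pi.single i 1} →
      d₄ ∈ insert (0 : Fin n → ZMod k) {x | ∃ i, x = Pi.single i 1} →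
      (∃ u ∈ insert (0 : Fin n → ZMod k) {x | ∃ i, x = Pi.single i 1},
        ∃ v ∈ insert (0 : Fin n → ZMod k) {x | ∃ i, x = Pi.single i 1},
          d₁ - d₂ + d₃ - d₄ = u - v) →
      d₁ = d₂ ∨ d₃ = d₄ ∨ d₁ = d₄ ∨ d₃ = d₂ := by
  intro d₁ d₂ d₃ d₄ h1 h2 h3 h4 ⟨u, hu, v, hv, heq⟩
  obtain ⟨o1, rfl⟩ := mem_ind h1
  obtain ⟨o2, rfl⟩ := mem_ind h2
  obtain ⟨o3, rfl⟩ := mem_ind h3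
  obtain ⟨o4, rfl⟩ := mem_ind h4
  obtain ⟨o5, rfl⟩ := mem_ind hu
  obtain ⟨o6, rfl⟩ := mem_ind hv
  have H : ∀ j, cnt o1 j + cnt o3 j + cnt o6 j = cnt o2 j + cnt o4 j + cnt o5 j := by
    intro j
    have hj := congrFun heq j
    simp only [Pi.sub_apply, Pi.add_apply, ind] at hj
    have h0 : (((cnt o1 j - cnt o2 j + cnt o3 j - cnt o4 j - cnt o5 j + cnt o6 j : ℤ)) : ZMod k) = 0 := by
      push_cast
      linear_combination hj
    rw [ZMod.intCast_zmod_eq_zero_iff_dvd] at h0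
    have b1 := cnt_cases o1 j
    have b2 := cnt_cases o2 j
    have b3 := cnt_cases o3 j
    have b4 := cnt_cases o4 j
    have b5 := cnt_cases o5 j
    have b6 := cnt_cases o6 j
    have hz : cnt o1 j - cnt o2 j + cnt o3 j - cnt o4 j - cnt o5 j + cnt o6 j = 0 := by
      refine Int.eq_zero_of_abs_lt_dvd h0 ?_
      have : (3 : ℤ) < (k : ℤ) := by exact_mod_cast hk
      rw [abs_lt]
      omega
    omega
  rcases key o1 o2 o3 o4 o5 o6 H with h | h | h | h
  · exact Or.inl (by rw [h])
  · exact Or.inr (Or.inl (by rw [h]))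
  · exact Or.inr (Or.inr (Or.inl (by rw [h])))
  · exact Or.inr (Or.inr (Or.inr (by rw [h])))
end

section
/- Let G = (C₃)^n with n ≥ 3 and D_n = {e₀, e₁, …, e_n} the canonical quasi difference set. Then D(G, D_n) is not Veblenian: taking L₁ = [−e₁], L₂ = [−e₂] through the point e₀ = 0, and K₁ = [e₁+e₂], K₂ = [−e₁−e₂+e₃], the line K₁ crosses L₁ and L₂, K₂ crosses L₁ and L₂, neither K₁ nor K₂ passes through 0, yet K₁ and K₂ have no common point. -/
set_option maxHeartbeats 1000000


/-- D((C₃)ⁿ, Dₙ) (n ≥ 3) is not Veblenian: witnessed by the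
lines L₁ = [-e₁], L₂ = [-e₂] through 0 and K₁ = [e₁+e₂], K₂ = [-e₁-e₂+e₃]. -/
theorem stmt12 (n : ℕ) (hn : 3 ≤ n) :
    let Dn : Set (Fin n → ZMod 3) := insert 0 {x | ∃ i, x = Pi.single i 1}
    let line : (Fin n → ZMod 3) → Set (Fin n → ZMod 3) := fun b => {x | x - b ∈ Dn}
    let e₁ : Fin n → ZMod 3 := Pi.single ⟨0, by omega⟩ 1
    let e₂ : Fin n → ZMod 3 := Pi.single ⟨1, by omega⟩ 1
    let e₃ : Fin n → ZMod 3 := Pi.single ⟨2, by omega⟩ 1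
    (0 : Fin n → ZMod 3) ∈ line (-e₁) ∧ (0 : Fin n → ZMod 3) ∈ line (-e₂) ∧
    line (-e₁) ≠ line (-e₂) ∧
    (∃ x, x ∈ line (e₁ + e₂) ∧ x ∈ line (-e₁)) ∧
    (∃ x, x ∈ line (e₁ + e₂) ∧ x ∈ line (-e₂)) ∧
    (∃ x, x ∈ line (-e₁ - e₂ + e₃) ∧ x ∈ line (-e₁)) ∧
    (∃ x, x ∈ line (-e₁ - e₂ + e₃) ∧ x ∈ line (-e₂)) ∧
    (0 : Fin n → ZMod 3) ∉ line (e₁ + e₂) ∧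
    (0 : Fin n → ZMod 3) ∉ line (-e₁ - e₂ + e₃) ∧
    ¬ ∃ x, x ∈ line (e₁ + e₂) ∧ x ∈ line (-e₁ - e₂ + e₃) := by
  intro Dn line e₁ e₂ e₃
  have i0 : Fin n := ⟨0, by omega⟩
  have mem_line : ∀ x b : Fin n → ZMod 3,
      x ∈ line b ↔ x - b = 0 ∨ ∃ i, x - b = Pi.single i 1 := by
    intro x b
    simp [line, Dn, Set.mem_insert_iff]
  have veq : ∀ (x b : Fin n → ZMod 3) (i : Fin n), x - b = Pi.single i 1 → x ∈ line b := by
    intro x b i h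
    exact (mem_line x b).2 (Or.inr ⟨i, h⟩)
  refine ⟨?_, ?_, ?_, ?_, ?_, ?_, ?_, ?_, ?_, ?_⟩
  · refine veq _ _ ⟨0, by omega⟩ ?_
    funext j
    simp only [e₁, Pi.sub_apply, Pi.neg_apply, Pi.zero_apply, Pi.single_apply]
    split_ifs <;> first | decide | simp_all | (simp only [Fin.ext_iff] at *; omega)
  · refine veq _ _ ⟨1, by omega⟩ ?_
    funext j
    simp only [e₂, Pi.sub_apply, Pi.neg_apply, Pi.zero_apply, Pi.single_apply]
    split_ifs <;> first | decide | simp_all | (simp only [Fin.ext_iff] at *; omega)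
  · -- lines differ: -e₁ is on line (-e₁) but not on line (-e₂)
    intro h
    have h1 : -e₁ ∈ line (-e₁) := (mem_line _ _).2 (Or.inl (by abel))
    rw [h, mem_line] at h1
    rcases h1 with h1 | ⟨i, h1⟩
    · have := congrFun h1 ⟨0, by omega⟩
      simp only [e₁, e₂, Pi.sub_apply, Pi.neg_apply, Pi.zero_apply, Pi.single_apply] at this
      clear mem_line veq
      split_ifs at this
      all_goals try (revert this; decide)
      all_goals simp only [Fin.ext_iff] at *
      all_goals omega
    · have h0 := congrFun h1 ⟨0, by omega⟩
      have h2 := congrFun h1 ⟨1, by omega⟩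
      simp only [e₁, e₂, Pi.sub_apply, Pi.neg_apply, Pi.single_apply] at h0 h2
      clear mem_line veq
      split_ifs at h0 h2
      all_goals try (revert h0; decide)
      all_goals try (revert h2; decide)
      all_goals simp only [Fin.ext_iff] at *
      all_goals omega
  · -- x = -e₁ + e₂
    refine ⟨-e₁ + e₂, veq _ _ ⟨0, by omega⟩ ?_, veq _ _ ⟨1, by omega⟩ ?_⟩ <;>
    · funext j
      simp only [e₁, e₂, Pi.sub_apply, Pi.add_apply, Pi.neg_apply, Pi.single_apply]
      split_ifs <;> first | decide | simp_all | (simp only [Fin.ext_iff] at *; omega)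
  · -- x = e₁ - e₂
    refine ⟨e₁ - e₂, veq _ _ ⟨1, by omega⟩ ?_, veq _ _ ⟨0, by omega⟩ ?_⟩ <;>
    · funext j
      simp only [e₁, e₂, Pi.sub_apply, Pi.add_apply, Pi.neg_apply, Pi.single_apply]
      split_ifs <;> first | decide | simp_all | (simp only [Fin.ext_iff] at *; omega)
  · -- x = -e₁ + e₃
    refine ⟨-e₁ + e₃, veq _ _ ⟨1, by omega⟩ ?_, veq _ _ ⟨2, by omega⟩ ?_⟩ <;>
    · funext j
      simp only [e₁, e₂, e₃, Pi.sub_apply, Pi.add_apply, Pi.neg_apply, Pi.single_apply]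
      split_ifs <;> first | decide | simp_all | (simp only [Fin.ext_iff] at *; omega)
  · -- x = -e₂ + e₃
    refine ⟨-e₂ + e₃, veq _ _ ⟨0, by omega⟩ ?_, veq _ _ ⟨2, by omega⟩ ?_⟩ <;>
    · funext j
      simp only [e₁, e₂, e₃, Pi.sub_apply, Pi.add_apply, Pi.neg_apply, Pi.single_apply]
      split_ifs <;> first | decide | simp_all | (simp only [Fin.ext_iff] at *; omega)
  · -- 0 ∉ line (e₁ + e₂)
    rw [mem_line]
    rintro (h | ⟨i, h⟩)
    · have := congrFun h ⟨0, by omega⟩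
      simp only [e₁, e₂, Pi.sub_apply, Pi.add_apply, Pi.zero_apply, Pi.single_apply] at this
      clear mem_line veq
      split_ifs at this
      all_goals try (revert this; decide)
      all_goals simp only [Fin.ext_iff] at *
      all_goals omega
    · have h0 := congrFun h ⟨0, by omega⟩
      have h1 := congrFun h ⟨1, by omega⟩
      simp only [e₁, e₂, Pi.sub_apply, Pi.add_apply, Pi.zero_apply, Pi.single_apply] at h0 h1
      clear mem_line veq
      split_ifs at h0 h1
      all_goals try (revert h0; decide)
      all_goals try (revert h1; decide)
      all_goals simp only [Fin.ext_iff] at *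
      all_goals omega
  · -- 0 ∉ line (-e₁ - e₂ + e₃)
    rw [mem_line]
    rintro (h | ⟨i, h⟩)
    · have := congrFun h ⟨0, by omega⟩
      simp only [e₁, e₂, e₃, Pi.sub_apply, Pi.add_apply, Pi.neg_apply, Pi.zero_apply,
        Pi.single_apply] at this
      clear mem_line veq
      split_ifs at this
      all_goals try (revert this; decide)
      all_goals simp only [Fin.ext_iff] at *
      all_goals omega
    · have h0 := congrFun h ⟨0, by omega⟩
      have h1 := congrFun h ⟨1, by omega⟩
      simp only [e₁, e₂, e₃, Pi.sub_apply, Pi.add_apply, Pi.neg_apply, Pi.zero_apply,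
        Pi.single_apply] at h0 h1
      clear mem_line veq
      split_ifs at h0 h1
      all_goals try (revert h0; decide)
      all_goals try (revert h1; decide)
      all_goals simp only [Fin.ext_iff] at *
      all_goals omega
  · -- K₁ and K₂ do not cross
    rintro ⟨x, hx1, hx2⟩
    rw [mem_line] at hx1 hx2
    have key : (x - (e₁ + e₂)) - (x - (-e₁ - e₂ + e₃)) = -e₁ - e₂ + e₃ - (e₁ + e₂) := by
      abel
    rcases hx1 with h1 | ⟨i, h1⟩ <;> rcases hx2 with h2 | ⟨j, h2⟩ <;>
      rw [h1, h2] at key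
    · have := congrFun key ⟨0, by omega⟩
      simp only [e₁, e₂, e₃, Pi.sub_apply, Pi.add_apply, Pi.neg_apply, Pi.zero_apply,
        Pi.single_apply] at this
      clear mem_line veq
      split_ifs at this
      all_goals try (revert this; decide)
      all_goals simp only [Fin.ext_iff] at *
      all_goals omega
    · have h0 := congrFun key ⟨0, by omega⟩
      have hh1 := congrFun key ⟨1, by omega⟩
      simp only [e₁, e₂, e₃, Pi.sub_apply, Pi.add_apply, Pi.neg_apply, Pi.zero_apply,
        Pi.single_apply] at h0 hh1
      clear mem_line veq
      split_ifs at h0 hh1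
      all_goals try (revert h0; decide)
      all_goals try (revert hh1; decide)
      all_goals simp only [Fin.ext_iff] at *
      all_goals omega
    · have h0 := congrFun key ⟨0, by omega⟩
      have hh1 := congrFun key ⟨1, by omega⟩
      simp only [e₁, e₂, e₃, Pi.sub_apply, Pi.add_apply, Pi.neg_apply, Pi.zero_apply,
        Pi.single_apply] at h0 hh1
      clear mem_line veq
      split_ifs at h0 hh1
      all_goals try (revert h0; decide)
      all_goals try (revert hh1; decide)
      all_goals simp only [Fin.ext_iff] at *
      all_goals omega
    · have h0 := congrFun key ⟨0, by omega⟩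
      have hh1 := congrFun key ⟨1, by omega⟩
      simp only [e₁, e₂, e₃, Pi.sub_apply, Pi.add_apply, Pi.neg_apply, Pi.zero_apply,
        Pi.single_apply] at h0 hh1
      clear mem_line veq
      split_ifs at h0 hh1
      all_goals try (revert h0; decide)
      all_goals try (revert hh1; decide)
      all_goals simp only [Fin.ext_iff] at *
      all_goals omega
end
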